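/- arXiv:2302.07565 — 4 statements merged into one kernel-verified Lean document; each statement's English description precedes it below -/
import Mathlib

section
/- For every integer ℓ ≥ 1 and every real number x, φ_ℓ(x) > φ_{ℓ+1}(x). -/
/-!
Writing `ℓ = j + 1`, integrating the exponential series of `e^{(1-θ)x}` term by term against
`θ^j / j!` and evaluating the Beta integrals `∫₀¹ θ^j (1-θ)^n = j! n! / (j+n+1)!` gives
`φ_{j+1}(x) = ∫₀¹ e^{(1-θ)x} θ^j / j! dθ`. Hence `φ_ℓ(x) - φ_{ℓ+1}(x)` is the integral of
`e^{(1-θ)x} (θ^j / j! - θ^{j+1} / (j+1)!) = e^{(1-θ)x} (θ^j / j!) (1 - θ / (j+1))`,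
which is positive on `(0, 1)`.
-/

noncomputable def phiR (ℓ : ℕ) (x : ℝ) : ℝ :=
  ∑' k : ℕ, x ^ k / (Nat.factorial (k + ℓ) : ℝ)

open MeasureTheory Set Nat Real

theorem integral_pow_mul_one_sub_pow (m n : ℕ) :
    ∫ θ in (0:ℝ)..1, θ ^ m * (1 - θ) ^ n = (m ! * n ! : ℝ) / (m + n + 1)! := by
  induction n generalizing m with
  | zero =>
    simp only [pow_zero, mul_one, integral_pow, Nat.factorial_zero, add_zero, factorial_succ]
    push_cast
    field_simp
    simp
  | succ n ih =>
    have hu : ∀ θ ∈ uIcc (0:ℝ) 1,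
        HasDerivAt (fun θ : ℝ => (1 - θ) ^ (n + 1)) (-((n + 1) * (1 - θ) ^ n)) θ := by
      intro θ _
      simpa using ((hasDerivAt_id θ).const_sub 1).fun_pow (n + 1)
    have hv : ∀ θ ∈ uIcc (0:ℝ) 1, HasDerivAt (fun θ : ℝ => θ ^ (m + 1) / (m + 1)) (θ ^ m) θ := by
      intro θ _
      have h := (hasDerivAt_pow (m + 1) θ).div_const ((m : ℝ) + 1)
      rwa [Nat.add_sub_cancel, Nat.cast_succ, mul_div_cancel_left₀ _ (by positivity)] at h
    have parts := intervalIntegral.integral_mul_deriv_eq_deriv_mul hu hv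
      ((by fun_prop : Continuous fun θ : ℝ => -((n + 1) * (1 - θ) ^ n)).intervalIntegrable _ _)
      ((continuous_pow m).intervalIntegrable _ _)
    simp only [sub_self, zero_pow (succ_ne_zero _), zero_mul, zero_div, mul_zero, sub_zero,
      zero_sub] at parts
    calc ∫ θ in (0:ℝ)..1, θ ^ m * (1 - θ) ^ (n + 1)
        = ∫ θ in (0:ℝ)..1, (1 - θ) ^ (n + 1) * θ ^ m := by simp only [mul_comm]
      _ = (n + 1) / (m + 1) * ∫ θ in (0:ℝ)..1, θ ^ (m + 1) * (1 - θ) ^ n := by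
        rw [parts, ← intervalIntegral.integral_const_mul, ← intervalIntegral.integral_neg]
        congr 1 with θ
        field_simp
      _ = (m ! * (n + 1)! : ℝ) / (m + (n + 1) + 1)! := by
        rw [ih, show m + 1 + n + 1 = m + (n + 1) + 1 by ring, factorial_succ m, factorial_succ n]
        push_cast
        field_simp

theorem phiR_succ_eq_integral (j : ℕ) (x : ℝ) :
    phiR (j + 1) x = ∫ θ in (0:ℝ)..1, exp ((1 - θ) * x) * (θ ^ j / j !) := by
  have hterm : ∀ n : ℕ, ∫ θ in (0:ℝ)..1, ((1 - θ) * x) ^ n / n ! * (θ ^ j / j !)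
      = x ^ n / (n + (j + 1))! := by
    intro n
    have hfac : (n ! : ℝ) ≠ 0 := by positivity
    calc ∫ θ in (0:ℝ)..1, ((1 - θ) * x) ^ n / n ! * (θ ^ j / j !)
        = x ^ n / (n ! * j !) * ∫ θ in (0:ℝ)..1, θ ^ j * (1 - θ) ^ n := by
          rw [← intervalIntegral.integral_const_mul]
          congr 1 with θ
          rw [mul_pow]
          ring
      _ = x ^ n / (n + (j + 1))! := by
          rw [integral_pow_mul_one_sub_pow, show j + n + 1 = n + (j + 1) by ring]
          field_simp
  have hbound : ∀ n : ℕ, ∀ θ ∈ Ioc (0:ℝ) 1,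
      ‖((1 - θ) * x) ^ n / n ! * (θ ^ j / j !)‖ ≤ |x| ^ n / n ! := by
    rintro n θ ⟨hθ0, hθ1⟩
    have h1θ : |1 - θ| ≤ 1 := abs_le.2 ⟨by linarith, by linarith⟩
    have hθj : θ ^ j / j ! ≤ 1 :=
      div_le_one_of_le₀ ((pow_le_one₀ hθ0.le hθ1).trans (one_le_cast.2 j.factorial_pos))
        (by positivity)
    rw [norm_mul, Real.norm_of_nonneg (by positivity : 0 ≤ θ ^ j / j !), norm_div, norm_pow,
      Real.norm_natCast, norm_mul, Real.norm_eq_abs, Real.norm_eq_abs]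
    calc (|1 - θ| * |x|) ^ n / n ! * (θ ^ j / j !) ≤ (1 * |x|) ^ n / n ! * 1 := by gcongr
      _ = |x| ^ n / n ! := by ring
  have hsum := intervalIntegral.hasSum_integral_of_dominated_convergence (μ := volume)
    (fun n _ => |x| ^ n / n !) (fun n => (by fun_prop : Continuous fun θ : ℝ =>
      ((1 - θ) * x) ^ n / n ! * (θ ^ j / j !)).aestronglyMeasurable)
    (fun n => ae_of_all _ fun θ hθ => hbound n θ (by rwa [uIoc_of_le zero_le_one] at hθ))
    (ae_of_all _ fun _ _ => summable_pow_div_factorial |x|)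
    intervalIntegrable_const
    (ae_of_all _ fun θ _ => by
      simpa only [Real.exp_eq_exp_ℝ] using
        (NormedSpace.expSeries_div_hasSum_exp ((1 - θ) * x)).mul_right (θ ^ j / j !))
  rw [Real.exp_eq_exp_ℝ]
  exact (hsum.congr_fun fun n => (hterm n).symm).tsum_eq

theorem pow_succ_div_factorial_lt {θ : ℝ} (j : ℕ) (h0 : 0 < θ) (h1 : θ < j + 1) :
    θ ^ (j + 1) / (j + 1)! < θ ^ j / j ! := by
  have hj : (0 : ℝ) < j + 1 := by positivity
  calc θ ^ (j + 1) / (j + 1)! = θ / (j + 1) * (θ ^ j / j !) := by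
        rw [factorial_succ, pow_succ]
        push_cast
        field_simp
    _ < 1 * (θ ^ j / j !) := by gcongr; rwa [div_lt_one hj]
    _ = θ ^ j / j ! := one_mul _

theorem phiR_strict_mono (ℓ : ℕ) (hℓ : 1 ≤ ℓ) (x : ℝ) :
    phiR (ℓ + 1) x < phiR ℓ x := by
  obtain ⟨j, rfl⟩ := Nat.exists_eq_add_of_le' hℓ
  rw [phiR_succ_eq_integral, phiR_succ_eq_integral]
  have hcont (i : ℕ) : Continuous fun θ : ℝ => exp ((1 - θ) * x) * (θ ^ i / i !) := by fun_prop
  rw [← sub_pos, ← intervalIntegral.integral_sub ((hcont j).intervalIntegrable 0 1)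
    ((hcont (j + 1)).intervalIntegrable 0 1)]
  refine intervalIntegral.intervalIntegral_pos_of_pos_on (((hcont j).sub (hcont (j + 1))).intervalIntegrable 0 1)
    (fun θ ⟨hθ0, hθ1⟩ => ?_) zero_lt_one
  rw [← mul_sub]
  have hθj : θ < j + 1 := by linarith [(j.cast_nonneg : (0 : ℝ) ≤ j)]
  exact mul_pos (exp_pos _) (sub_pos.2 (pow_succ_div_factorial_lt j hθ0 hθj))
end

section
/- For every integer ℓ ≥ 1 and every real number x, 0 < 1 - φ_{ℓ+1}(x)/φ_ℓ(x) < 1. -/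
/-!
The functions `ψ_ℓ x = x ^ ℓ * φ_ℓ x` are the tails `exp x - ∑_{j<ℓ} x^j/j!` of the exponential
series, so `ψ_{ℓ+1}' = ψ_ℓ` and `ψ_{ℓ+1} 0 = 0`. For `x ≥ 0` both claims `0 < φ_{ℓ+1} < φ_ℓ`
follow by comparing the series termwise. For `x < 0` a function vanishing at `0` with negative
derivative on `(-∞, 0)` is positive there; applied to `(-x)^(ℓ+1) φ_{ℓ+1}`, whose derivative is
`-(-x)^ℓ φ_ℓ`, this gives positivity by induction on `ℓ`, and applied to
`(-x)^(ℓ+1) (φ_ℓ - φ_{ℓ+1})`, whose derivative is `-(-x)^ℓ φ_{ℓ-1}`, it gives the comparison.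
-/

open Nat

lemma pos_of_hasDerivAt_of_deriv_neg {f f' : ℝ → ℝ} (hf : ∀ y, HasDerivAt f (f' y) y)
    (hf' : ∀ y < 0, f' y < 0) (hf0 : f 0 = 0) {x : ℝ} (hx : x < 0) : 0 < f x := by
  obtain ⟨c, ⟨-, hc0⟩, hc⟩ := exists_hasDerivAt_eq_slope f f' hx
    (fun y _ => (hf y).continuousAt.continuousWithinAt) (fun y _ => hf y)
  have hslope : (f 0 - f x) / (0 - x) < 0 := hc ▸ hf' c hc0
  rw [div_lt_iff₀ (sub_pos.2 hx), zero_mul, hf0] at hslope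
  linarith

namespace phiR

lemma summable (ℓ : ℕ) (x : ℝ) : Summable fun k : ℕ => x ^ k / ((k + ℓ)! : ℝ) := by
  refine .of_norm_bounded (Real.summable_pow_div_factorial |x|) fun k => ?_
  rw [norm_div, norm_pow, Real.norm_eq_abs, Real.norm_natCast]
  gcongr
  exact Nat.le_add_right k ℓ

lemma zero_eq_exp (x : ℝ) : phiR 0 x = Real.exp x := by
  simp [phiR, Real.exp_eq_exp_ℝ, NormedSpace.exp_eq_tsum_div]

lemma eq_inv_factorial_add_mul (ℓ : ℕ) (x : ℝ) :
    phiR ℓ x = (ℓ ! : ℝ)⁻¹ + x * phiR (ℓ + 1) x := by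
  rw [phiR, (summable ℓ x).tsum_eq_zero_add, phiR, ← tsum_mul_left]
  congr 1
  · simp
  · exact tsum_congr fun k => by rw [pow_succ, Nat.add_right_comm, Nat.add_assoc]; ring

lemma hasDerivAt_pow_succ_mul (ℓ : ℕ) (x : ℝ) :
    HasDerivAt (fun y => y ^ (ℓ + 1) * phiR (ℓ + 1) y) (x ^ ℓ * phiR ℓ x) x := by
  induction ℓ generalizing x with
  | zero =>
    have h : (fun y : ℝ => y ^ 1 * phiR 1 y) = fun y => Real.exp y - 1 := by
      funext y
      rw [← zero_eq_exp, eq_inv_factorial_add_mul 0 y]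
      ring
    rw [h]
    exact ((Real.hasDerivAt_exp x).sub_const 1).congr_deriv (by simp [zero_eq_exp])
  | succ ℓ ih =>
    have h : (fun y : ℝ => y ^ (ℓ + 2) * phiR (ℓ + 2) y)
        = fun y => y ^ (ℓ + 1) * phiR (ℓ + 1) y - y ^ (ℓ + 1) / ((ℓ + 1)! : ℝ) := by
      funext y
      rw [eq_inv_factorial_add_mul (ℓ + 1) y]
      ring
    have hd := (ih x).sub ((hasDerivAt_pow (ℓ + 1) x).div_const ((ℓ + 1)! : ℝ))
    rw [h]
    refine hd.congr_deriv ?_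
    rw [eq_inv_factorial_add_mul ℓ x, Nat.factorial_succ]
    push_cast
    field_simp
    ring

lemma hasDerivAt_neg_pow_succ_mul (ℓ : ℕ) (x : ℝ) :
    HasDerivAt (fun y => (-y) ^ (ℓ + 1) * phiR (ℓ + 1) y) (-((-x) ^ ℓ * phiR ℓ x)) x := by
  have h : (fun y : ℝ => (-y) ^ (ℓ + 1) * phiR (ℓ + 1) y)
      = fun y => (-1) ^ (ℓ + 1) * (y ^ (ℓ + 1) * phiR (ℓ + 1) y) := by
    funext y
    rw [neg_pow y]
    ring
  rw [h]
  exact ((hasDerivAt_pow_succ_mul ℓ x).const_mul _).congr_deriv (by rw [neg_pow x]; ring)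

lemma pos_of_nonneg (ℓ : ℕ) {x : ℝ} (hx : 0 ≤ x) : 0 < phiR ℓ x :=
  (summable ℓ x).tsum_pos (fun k => by positivity) 0 (by positivity)

lemma pos_of_neg (ℓ : ℕ) {x : ℝ} (hx : x < 0) : 0 < phiR ℓ x := by
  induction ℓ generalizing x with
  | zero => exact zero_eq_exp x ▸ Real.exp_pos x
  | succ ℓ ih =>
    have h := pos_of_hasDerivAt_of_deriv_neg (hasDerivAt_neg_pow_succ_mul ℓ)
      (fun y hy => neg_neg_of_pos (mul_pos (pow_pos (neg_pos.2 hy) ℓ) (ih hy))) (by simp) hx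
    exact pos_of_mul_pos_right h (pow_pos (neg_pos.2 hx) _).le

lemma pos (ℓ : ℕ) (x : ℝ) : 0 < phiR ℓ x :=
  (le_or_gt 0 x).elim (pos_of_nonneg ℓ) (pos_of_neg ℓ)

lemma succ_lt_of_nonneg {ℓ : ℕ} (hℓ : 1 ≤ ℓ) {x : ℝ} (hx : 0 ≤ x) :
    phiR (ℓ + 1) x < phiR ℓ x := by
  have hfac : (ℓ ! : ℝ) < (ℓ + 1)! := by
    exact_mod_cast (Nat.factorial_lt (by omega)).2 (Nat.lt_succ_self ℓ)
  refine (summable (ℓ + 1) x).tsum_lt_tsum (i := 0) (fun k => ?_) ?_ (summable ℓ x)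
  · gcongr
    omega
  · simpa using inv_strictAnti₀ (by positivity) hfac

lemma succ_lt_of_neg {ℓ : ℕ} (hℓ : 1 ≤ ℓ) {x : ℝ} (hx : x < 0) :
    phiR (ℓ + 1) x < phiR ℓ x := by
  obtain ⟨m, rfl⟩ := Nat.exists_eq_add_of_le' hℓ
  have hd (y : ℝ) : HasDerivAt (fun y => (-y) * ((-y) ^ (m + 1) * phiR (m + 1) y)
      - (-y) ^ (m + 2) * phiR (m + 2) y) (-((-y) ^ (m + 1) * phiR m y)) y :=
    (((hasDerivAt_neg y).mul (hasDerivAt_neg_pow_succ_mul m y)).sub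
      (hasDerivAt_neg_pow_succ_mul (m + 1) y)).congr_deriv (by ring)
  have h := pos_of_hasDerivAt_of_deriv_neg hd
    (fun y hy => neg_neg_of_pos (mul_pos (pow_pos (neg_pos.2 hy) _) (pos m y))) (by simp) hx
  have h' : 0 < (-x) ^ (m + 2) * (phiR (m + 1) x - phiR (m + 2) x) := by
    convert h using 1
    ring
  linarith [pos_of_mul_pos_right h' (pow_pos (neg_pos.2 hx) _).le]

lemma succ_lt {ℓ : ℕ} (hℓ : 1 ≤ ℓ) (x : ℝ) : phiR (ℓ + 1) x < phiR ℓ x :=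
  (le_or_gt 0 x).elim (succ_lt_of_nonneg hℓ) (succ_lt_of_neg hℓ)

end phiR

theorem phiR_ratio_bound (ℓ : ℕ) (hℓ : 1 ≤ ℓ) (x : ℝ) :
    0 < 1 - phiR (ℓ + 1) x / phiR ℓ x ∧ 1 - phiR (ℓ + 1) x / phiR ℓ x < 1 := by
  have hratio_lt : phiR (ℓ + 1) x / phiR ℓ x < 1 :=
    (div_lt_one (phiR.pos ℓ x)).2 (phiR.succ_lt hℓ x)
  have hratio_pos : 0 < phiR (ℓ + 1) x / phiR ℓ x := div_pos (phiR.pos _ x) (phiR.pos ℓ x)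
  constructor <;> linarith
end

section
/- Let ℓ ≥ 1 and let z be a complex number with imaginary part in [-π/2, π/2]. Then |1 - φ_{ℓ+1}(z)/φ_ℓ(z)| < 1. -/
/-!
Integrating by parts, `φ_{n+1}(z) = ∫₀¹ e^{zs} (1 - s)ⁿ / n! ds`. With `a = φ_ℓ(z)` and
`b = φ_{ℓ+1}(z)` one has `‖a - b‖² = ‖a‖² - Re((2a - b) b̄)`, and `2a - b` is again such an
integral, with the weight `2(1 - s)^{ℓ-1}/(ℓ-1)! - (1 - s)^ℓ/ℓ!`, positive on `(0, 1)`. For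
`|Im z| ≤ π/2`, the integral of `e^{zs}` against a positive weight has positive real part
(as `cos (s Im z) > 0`) and imaginary part of the sign of `Im z` (as `sin (s Im z)` has that
sign), so `Re((2a - b) b̄) > 0`.
-/

noncomputable def phi (ℓ : ℕ) (z : ℂ) : ℂ :=
  ∑' k : ℕ, z ^ k / (Nat.factorial (k + ℓ) : ℂ)

open Complex Set
open scoped ComplexConjugate Nat Real

lemma summable_phi (n : ℕ) (z : ℂ) : Summable fun k : ℕ => z ^ k / ((k + n)! : ℂ) := by
  refine .of_norm_bounded (Real.summable_pow_div_factorial ‖z‖) fun k => ?_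
  rw [norm_div, norm_pow, Complex.norm_natCast]
  gcongr
  exact Nat.le_add_right k n

lemma phi_zero_eq_exp (z : ℂ) : phi 0 z = cexp z := by
  simp [phi, Complex.exp_eq_exp_ℂ, NormedSpace.exp_eq_tsum_div]

lemma phi_eq_inv_factorial_add_mul (n : ℕ) (z : ℂ) :
    phi n z = 1 / n ! + z * phi (n + 1) z := by
  rw [phi, (summable_phi n z).tsum_eq_zero_add, phi, ← tsum_mul_left]
  congr 1
  · simp
  · refine tsum_congr fun k => ?_
    rw [pow_succ, Nat.add_right_comm, Nat.add_assoc]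
    ring

noncomputable def expIntegral (w : ℝ → ℝ) (z : ℂ) : ℂ :=
  ∫ s in (0 : ℝ)..1, cexp (z * s) * w s

section expIntegral

variable {w w₁ w₂ : ℝ → ℝ} {z : ℂ}

lemma intervalIntegrable_expIntegral (hw : Continuous w) :
    IntervalIntegrable (fun s : ℝ => cexp (z * s) * w s) MeasureTheory.volume 0 1 := by
  apply Continuous.intervalIntegrable
  fun_prop

lemma re_expIntegral (hw : Continuous w) :
    (expIntegral w z).re = ∫ s in (0 : ℝ)..1, Real.exp (z.re * s) * Real.cos (z.im * s) * w s := by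
  rw [expIntegral, ← Complex.reCLM_apply,
    ← Complex.reCLM.intervalIntegral_comp_comm (intervalIntegrable_expIntegral hw)]
  simp [Complex.exp_re]

lemma im_expIntegral (hw : Continuous w) :
    (expIntegral w z).im = ∫ s in (0 : ℝ)..1, Real.exp (z.re * s) * Real.sin (z.im * s) * w s := by
  rw [expIntegral, ← Complex.imCLM_apply,
    ← Complex.imCLM.intervalIntegral_comp_comm (intervalIntegrable_expIntegral hw)]
  simp [Complex.exp_im]

lemma expIntegral_conj : expIntegral w (conj z) = conj (expIntegral w z) := by
  simp only [expIntegral, ← intervalIntegral.intervalIntegral_conj, map_mul, ← Complex.exp_conj,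
    Complex.conj_ofReal]

lemma expIntegral_sub (hw₁ : Continuous w₁) (hw₂ : Continuous w₂) :
    expIntegral (w₁ - w₂) z = expIntegral w₁ z - expIntegral w₂ z := by
  rw [expIntegral, expIntegral, expIntegral, ← intervalIntegral.integral_sub
    (intervalIntegrable_expIntegral hw₁) (intervalIntegrable_expIntegral hw₂)]
  simp only [Pi.sub_apply, ofReal_sub, mul_sub]

lemma expIntegral_smul (c : ℝ) :
    expIntegral (c • w) z = c * expIntegral w z := by
  rw [expIntegral, expIntegral, ← intervalIntegral.integral_const_mul]
  congr 1 with s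
  simp only [Pi.smul_apply, smul_eq_mul, ofReal_mul]
  ring

lemma re_expIntegral_pos (hw : Continuous w) (hpos : ∀ s ∈ Ioo 0 1, 0 < w s)
    (hz : |z.im| ≤ π / 2) : 0 < (expIntegral w z).re := by
  rw [re_expIntegral hw]
  refine intervalIntegral.intervalIntegral_pos_of_pos_on
    (Continuous.intervalIntegrable (by fun_prop) 0 1) (fun s hs => ?_) one_pos
  have hcos : 0 < Real.cos (z.im * s) := by
    refine Real.cos_pos_of_mem_Ioo (abs_lt.1 ?_)
    calc |z.im * s| = |z.im| * s := by rw [abs_mul, abs_of_pos hs.1]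
      _ < π / 2 := by nlinarith [Real.pi_pos, hs.1, hs.2, abs_nonneg z.im]
  exact mul_pos (mul_pos (Real.exp_pos _) hcos) (hpos s hs)

lemma im_expIntegral_nonneg (hw : Continuous w) (hnonneg : ∀ s ∈ Icc 0 1, 0 ≤ w s)
    (hz₀ : 0 ≤ z.im) (hzπ : z.im ≤ π) : 0 ≤ (expIntegral w z).im := by
  rw [im_expIntegral hw]
  refine intervalIntegral.integral_nonneg zero_le_one fun s hs => ?_
  have hsin : 0 ≤ Real.sin (z.im * s) :=
    Real.sin_nonneg_of_nonneg_of_le_pi (mul_nonneg hz₀ hs.1) (by nlinarith [hs.1, hs.2])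
  exact mul_nonneg (mul_nonneg (Real.exp_pos _).le hsin) (hnonneg s hs)

lemma im_expIntegral_mul_im_nonneg (hw₁ : Continuous w₁) (hw₂ : Continuous w₂)
    (hnonneg₁ : ∀ s ∈ Icc 0 1, 0 ≤ w₁ s) (hnonneg₂ : ∀ s ∈ Icc 0 1, 0 ≤ w₂ s)
    (hz : |z.im| ≤ π) : 0 ≤ (expIntegral w₁ z).im * (expIntegral w₂ z).im := by
  obtain ⟨hz₁, hz₂⟩ := abs_le.1 hz
  rcases le_total 0 z.im with h | h
  · exact mul_nonneg (im_expIntegral_nonneg hw₁ hnonneg₁ h hz₂)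
      (im_expIntegral_nonneg hw₂ hnonneg₂ h hz₂)
  · have hc₀ : 0 ≤ (conj z).im := by rw [conj_im]; linarith
    have hcπ : (conj z).im ≤ π := by rw [conj_im]; linarith
    have h₁ := im_expIntegral_nonneg hw₁ hnonneg₁ hc₀ hcπ
    have h₂ := im_expIntegral_nonneg hw₂ hnonneg₂ hc₀ hcπ
    rw [expIntegral_conj, conj_im] at h₁ h₂
    nlinarith

lemma re_expIntegral_mul_conj_pos (hw₁ : Continuous w₁) (hw₂ : Continuous w₂)
    (hpos₁ : ∀ s ∈ Ioo 0 1, 0 < w₁ s) (hpos₂ : ∀ s ∈ Ioo 0 1, 0 < w₂ s)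
    (hz : |z.im| ≤ π / 2) : 0 < (expIntegral w₁ z * conj (expIntegral w₂ z)).re := by
  have hnonneg {w : ℝ → ℝ} (hw : Continuous w) (hpos : ∀ s ∈ Ioo 0 1, 0 < w s) :
      ∀ s ∈ Icc 0 1, 0 ≤ w s := by
    have : closure (Ioo (0 : ℝ) 1) ⊆ {s | 0 ≤ w s} :=
      (isClosed_le continuous_const hw).closure_subset_iff.2 fun s hs => (hpos s hs).le
    rwa [closure_Ioo zero_ne_one] at this
  rw [mul_re, conj_re, conj_im, mul_neg, sub_neg_eq_add]
  exact add_pos_of_pos_of_nonneg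
    (mul_pos (re_expIntegral_pos hw₁ hpos₁ hz) (re_expIntegral_pos hw₂ hpos₂ hz))
    (im_expIntegral_mul_im_nonneg hw₁ hw₂ (hnonneg hw₁ hpos₁) (hnonneg hw₂ hpos₂)
      (by linarith [Real.pi_pos]))

end expIntegral

noncomputable def phiWeight (n : ℕ) (s : ℝ) : ℝ := (1 - s) ^ n / n !

lemma continuous_phiWeight (n : ℕ) : Continuous (phiWeight n) := by
  unfold phiWeight
  fun_prop

lemma phiWeight_pos (n : ℕ) {s : ℝ} (hs : s < 1) : 0 < phiWeight n s := by
  have : 0 < 1 - s := by linarith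
  unfold phiWeight
  positivity

lemma phiWeight_succ_le (n : ℕ) {s : ℝ} (hs₀ : 0 ≤ s) (hs₁ : s ≤ 1) :
    phiWeight (n + 1) s ≤ phiWeight n s := by
  have hs : 0 ≤ 1 - s := by linarith
  exact div_le_div₀ (by positivity) (pow_le_pow_of_le_one hs (by linarith) n.le_succ)
    (by positivity) (by exact_mod_cast Nat.factorial_le n.le_succ)

lemma hasDerivAt_phiWeight (n : ℕ) (s : ℝ) :
    HasDerivAt (phiWeight (n + 1)) (-phiWeight n s) s := by
  have := (((hasDerivAt_id s).const_sub 1).pow (n + 1)).div_const ((n + 1)! : ℝ)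
  refine this.congr_deriv ?_
  simp only [phiWeight, id, Nat.add_sub_cancel, Nat.factorial_succ, Nat.cast_mul]
  field_simp

lemma expIntegral_phiWeight (n : ℕ) (z : ℂ) :
    expIntegral (phiWeight n) z = 1 / (n + 1)! + z * expIntegral (phiWeight (n + 1)) z := by
  have hibp := intervalIntegral.integral_mul_deriv_eq_deriv_mul (a := 0) (b := 1)
    (u := fun s : ℝ => cexp (z * s)) (u' := fun s : ℝ => z * cexp (z * s))
    (v := fun s : ℝ => -(phiWeight (n + 1) s : ℂ)) (v' := fun s : ℝ => (phiWeight n s : ℂ))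
    (fun s _ => ?_) (fun s _ => ?_) (Continuous.intervalIntegrable (by fun_prop) 0 1)
    (Continuous.intervalIntegrable ?_ 0 1)
  · have hremainder : ∫ s in (0 : ℝ)..1, z * cexp (z * s) * -(phiWeight (n + 1) s : ℂ)
        = -(z * expIntegral (phiWeight (n + 1)) z) := by
      rw [expIntegral, ← intervalIntegral.integral_const_mul, ← intervalIntegral.integral_neg]
      congr 1 with s
      ring
    rw [expIntegral, hibp, hremainder]
    simp [phiWeight]
  · simpa [mul_comm] using (((hasDerivAt_id s).ofReal_comp).const_mul z).cexp
  · exact ((hasDerivAt_phiWeight n s).ofReal_comp).neg.congr_deriv (by simp)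
  · exact continuous_ofReal.comp (continuous_phiWeight n)

lemma exp_eq_one_add_mul_expIntegral_phiWeight_zero (z : ℂ) :
    cexp z = 1 + z * expIntegral (phiWeight 0) z := by
  have hftc := intervalIntegral.integral_eq_sub_of_hasDerivAt (a := 0) (b := 1)
    (f := fun s : ℝ => cexp (z * s)) (f' := fun s : ℝ => z * cexp (z * s))
    (fun s _ => by simpa [mul_comm] using (((hasDerivAt_id s).ofReal_comp).const_mul z).cexp)
    (Continuous.intervalIntegrable (by fun_prop) 0 1)
  rw [expIntegral, ← intervalIntegral.integral_const_mul]
  simp only [phiWeight, pow_zero, Nat.factorial_zero, Nat.cast_one, div_one, ofReal_one, mul_one]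
  rw [hftc]
  simp

theorem phi_succ_eq_expIntegral (n : ℕ) (z : ℂ) : phi (n + 1) z = expIntegral (phiWeight n) z := by
  -- Both sides satisfy `f n = 1 / (n + 1)! + z * f (n + 1)`, which evaluates them at `z = 0`
  -- and determines them from `n = 0` otherwise.
  rcases eq_or_ne z 0 with rfl | hz
  · have hphi := phi_eq_inv_factorial_add_mul (n + 1) 0
    have hint := expIntegral_phiWeight n 0
    rw [zero_mul, add_zero] at hphi hint
    rw [hphi, hint]
  induction n with
  | zero =>
    have hphi := phi_eq_inv_factorial_add_mul 0 z
    rw [phi_zero_eq_exp, Nat.factorial_zero, Nat.cast_one, div_one] at hphi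
    refine mul_left_cancel₀ hz ?_
    linear_combination exp_eq_one_add_mul_expIntegral_phiWeight_zero z - hphi
  | succ n ih =>
    refine mul_left_cancel₀ hz ?_
    linear_combination expIntegral_phiWeight n z - phi_eq_inv_factorial_add_mul (n + 1) z + ih

lemma norm_one_sub_div_lt_one {a b : ℂ} (h : 0 < ((2 * a - b) * conj b).re) :
    ‖1 - b / a‖ < 1 := by
  have hsq : ‖a - b‖ ^ 2 < ‖a‖ ^ 2 := by
    -- `‖a - b‖ ^ 2 = ‖a‖ ^ 2 - Re ((2 * a - b) * conj b)`
    rw [Complex.sq_norm, Complex.sq_norm, normSq_apply, normSq_apply]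
    simp only [mul_re, mul_im, conj_re, conj_im, sub_re, sub_im, re_ofNat, im_ofNat] at h ⊢
    nlinarith
  have hlt : ‖a - b‖ < ‖a‖ := lt_of_pow_lt_pow_left₀ 2 (norm_nonneg _) hsq
  have ha : a ≠ 0 := norm_pos_iff.1 ((norm_nonneg _).trans_lt hlt)
  rwa [one_sub_div ha, norm_div, div_lt_one (norm_pos_iff.2 ha)]

theorem phi_ratio_abs_lt_one (ℓ : ℕ) (hℓ : 1 ≤ ℓ) (z : ℂ)
    (hz : z.im ∈ Set.Icc (-(Real.pi / 2)) (Real.pi / 2)) :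
    ‖1 - phi (ℓ + 1) z / phi ℓ z‖ < 1 := by
  obtain ⟨m, rfl⟩ := Nat.exists_eq_add_of_le' hℓ
  set w := (2 : ℝ) • phiWeight m - phiWeight (m + 1)
  have hw : Continuous w := ((continuous_phiWeight m).const_smul 2).sub (continuous_phiWeight _)
  have hcomb : 2 * expIntegral (phiWeight m) z - expIntegral (phiWeight (m + 1)) z =
      expIntegral w z := by
    rw [expIntegral_sub ((continuous_phiWeight m).const_smul 2) (continuous_phiWeight _),
      expIntegral_smul, ofReal_ofNat]
  have hwpos : ∀ s ∈ Ioo 0 1, 0 < w s := fun s hs => by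
    have := phiWeight_succ_le m hs.1.le hs.2.le
    have := phiWeight_pos m hs.2
    simp only [w, Pi.sub_apply, Pi.smul_apply, smul_eq_mul]
    linarith
  apply norm_one_sub_div_lt_one
  rw [phi_succ_eq_expIntegral, phi_succ_eq_expIntegral, hcomb]
  exact re_expIntegral_mul_conj_pos hw (continuous_phiWeight _) hwpos
    (fun s hs => phiWeight_pos _ hs.2) (abs_le.2 hz)
end

section
/- Let B, X_0 ∈ ℂ^{N×N}, b ∈ ℂ^N, and let X_k be the Newton iterates X_{k+1} = 2X_k - X_k B X_k. Then for each k ≥ 1, the vector x_k = X_k b lies in the Krylov subspace span{X_0 b, (X_0 B)X_0 b, ..., (X_0 B)^{2^k - 1} X_0 b}. -/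
/-!
The Newton iterates are `X_k = p_k(X₀ B) X₀` for polynomials `p_0 = 1`,
`p_{k+1} = 2 p_k - p_k X p_k`, because `X₀ B X₀` can be regrouped as `(X₀ B) X₀`.
Each step at most doubles the degree and adds one, so `deg p_k ≤ 2^k - 1`, and
`X_k b = p_k(X₀ B) (X₀ b)` is a combination of the first `2^k` Krylov vectors.
-/

open Polynomial Matrix

namespace Polynomial

variable (R : Type*) [CommRing R]

noncomputable def newtonInvPoly : ℕ → R[X]
  | 0 => 1
  | k + 1 => 2 * newtonInvPoly k - newtonInvPoly k * X * newtonInvPoly k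

variable {R}

theorem natDegree_newtonInvPoly_le (k : ℕ) : (newtonInvPoly R k).natDegree ≤ 2 ^ k - 1 := by
  induction k with
  | zero => simp [newtonInvPoly]
  | succ k ih =>
    set p := newtonInvPoly R k
    have hpow : 2 ^ (k + 1) = 2 * 2 ^ k := by ring
    have hpos : 1 ≤ 2 ^ k := Nat.one_le_two_pow
    have h_two : (2 * p).natDegree ≤ 2 ^ (k + 1) - 1 :=
      (natDegree_mul_le_of_le (natDegree_ofNat 2).le ih).trans (by omega)
    have h_quad : (p * X * p).natDegree ≤ 2 ^ (k + 1) - 1 :=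
      (natDegree_mul_le_of_le (natDegree_mul_le_of_le ih natDegree_X_le) ih).trans (by omega)
    exact (natDegree_sub_le _ _).trans (max_le h_two h_quad)

theorem newton_iterate_eq_aeval_newtonInvPoly {A : Type*} [Ring A] [Algebra R A]
    (B X₀ : A) (X : ℕ → A) (hX0 : X 0 = X₀) (hX : ∀ k, X (k + 1) = 2 • X k - X k * B * X k)
    (k : ℕ) : X k = aeval (X₀ * B) (newtonInvPoly R k) * X₀ := by
  induction k with
  | zero => simp [newtonInvPoly, hX0]
  | succ k ih =>
    rw [hX, ih, newtonInvPoly]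
    simp only [map_sub, map_mul, map_ofNat, aeval_X]
    rw [sub_mul, two_smul, two_mul, add_mul]
    simp only [mul_assoc]

end Polynomial

theorem Matrix.aeval_mulVec_mem_span_pow_mulVec {n R : Type*} [Fintype n] [DecidableEq n]
    [CommRing R] (M : Matrix n n R) (v : n → R) {p : R[X]} {d : ℕ} (hp : p.natDegree ≤ d) :
    aeval M p *ᵥ v ∈ Submodule.span R ((fun j : ℕ => (M ^ j) *ᵥ v) '' {j | j ≤ d}) := by
  rw [aeval_eq_sum_range, Matrix.sum_mulVec]
  refine Submodule.sum_mem _ fun j hj => ?_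
  rw [Matrix.smul_mulVec]
  refine Submodule.smul_mem _ _ (Submodule.subset_span ⟨j, ?_, rfl⟩)
  have := Finset.mem_range.mp hj
  show j ≤ d
  omega

theorem newton_krylov {N : ℕ} (B X₀ : Matrix (Fin N) (Fin N) ℂ) (b : Fin N → ℂ)
    (X : ℕ → Matrix (Fin N) (Fin N) ℂ) (hX0 : X 0 = X₀)
    (hX : ∀ k, X (k + 1) = 2 • X k - X k * B * X k) :
    ∀ k ≥ 1, (X k).mulVec b ∈
      Submodule.span ℂ
        ((fun j : ℕ => ((X₀ * B) ^ j).mulVec (X₀.mulVec b)) ''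
          {j | j ≤ 2 ^ k - 1}) := by
  intro k _
  rw [newton_iterate_eq_aeval_newtonInvPoly (R := ℂ) B X₀ X hX0 hX k, ← Matrix.mulVec_mulVec]
  exact Matrix.aeval_mulVec_mem_span_pow_mulVec _ _ (natDegree_newtonInvPoly_le (R := ℂ) k)
end
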